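/- arXiv:quant-ph/0201013 — 2 statements merged into one kernel-verified Lean document; each statement's English description precedes it below -/
import Mathlib

section
/- Semiidempotence holds in one direction: for any unit vector ψ of the n-fold tensor power of ℂ², Prob(AND(ψ, ψ)) ≤ Prob(ψ). -/
open Complex Finset

noncomputable section

/-- The `n`-fold tensor power of `ℂ²`, identified with `EuclideanSpace ℂ (Fin (2^n))`. -/
abbrev QReg (n : ℕ) := EuclideanSpace ℂ (Fin (2 ^ n))

/-- Flip the last bit of a binary index. -/
def flipIdx {N : ℕ} (j : Fin N) : Fin N :=
  ⟨(j.val ^^^ 1) % N, Nat.mod_lt _ j.pos⟩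

/-- The gate `NOT⁽ⁿ⁾`: flips the last bit of each basis label, i.e. swaps the
coordinates `a_{2k}` and `a_{2k+1}`. -/
def NOTg (n : ℕ) (ψ : QReg n) : QReg n := WithLp.toLp 2 (fun j => ψ (flipIdx j))

/-- The gate `√NOT⁽ⁿ⁾`: replaces each coordinate pair `(a_{2k}, a_{2k+1})` by
`(½(1+i)a_{2k} + ½(1−i)a_{2k+1}, ½(1−i)a_{2k} + ½(1+i)a_{2k+1})`. -/
def sqNOTg (n : ℕ) (ψ : QReg n) : QReg n := WithLp.toLp 2 (fun j =>
  if j.val % 2 = 0 then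
    (1 + Complex.I) / 2 * ψ j + (1 - Complex.I) / 2 * ψ (flipIdx j)
  else
    (1 - Complex.I) / 2 * ψ (flipIdx j) + (1 + Complex.I) / 2 * ψ j)

/-- Action of the Toffoli gate `T⁽ⁿ'ᵐ'¹⁾` on basis indices: if the bits `xₙ`
(weight `2^(m+1)`) and `y_m` (weight `2`) are both `1`, flip the last bit `z`. -/
def toffIdx (n m : ℕ) (j : Fin (2 ^ (n + m + 1))) : Fin (2 ^ (n + m + 1)) :=
  if (j.val / 2 ^ (m + 1)) % 2 = 1 ∧ (j.val / 2) % 2 = 1 then flipIdx j else j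

/-- The Toffoli gate `T⁽ⁿ'ᵐ'¹⁾`. -/
def Tg (n m : ℕ) (ψ : QReg (n + m + 1)) : QReg (n + m + 1) := WithLp.toLp 2 (fun j => ψ (toffIdx n m j))

/-- Tensor product of coefficient vectors: `(ψ ⊗ φ)_{2^m·j + k} = ψ_j · φ_k`. -/
def tensor {n m : ℕ} (ψ : QReg n) (φ : QReg m) : QReg (n + m) := WithLp.toLp 2 (fun j =>
  ψ ⟨j.val / 2 ^ m, by
        have h : (j : ℕ) < 2 ^ n * 2 ^ m :=
          lt_of_lt_of_le j.isLt (le_of_eq (pow_add 2 n m))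
        exact (Nat.div_lt_iff_lt_mul (Nat.two_pow_pos m)).mpr h⟩ *
  φ ⟨j.val % 2 ^ m, Nat.mod_lt _ (Nat.two_pow_pos m)⟩)

/-- The bit `|0⟩ = e₀ ∈ ℂ²`. -/
def ket0 : QReg 1 := WithLp.toLp 2 (fun j => if j.val = 0 then 1 else 0)

/-- `AND(ψ, φ) := T⁽ⁿ'ᵐ'¹⁾(ψ ⊗ φ ⊗ |0⟩)`. -/
def ANDg (n m : ℕ) (ψ : QReg n) (φ : QReg m) : QReg (n + m + 1) :=
  Tg n m (tensor (tensor ψ φ) ket0)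

/-- `OR(ψ, φ) := NOT(AND(NOT ψ, NOT φ))`. -/
def ORg (n m : ℕ) (ψ : QReg n) (φ : QReg m) : QReg (n + m + 1) :=
  NOTg (n + m + 1) (ANDg n m (NOTg n ψ) (NOTg m φ))

/-- The probability-value of a vector: the sum of `‖a_j‖²` over the odd indices `j`
(those whose basis label ends with the bit `1`). -/
def Prob {n : ℕ} (ψ : QReg n) : ℝ :=
  ∑ j ∈ Finset.univ.filter (fun j : Fin (2 ^ n) => j.val % 2 = 1), ‖ψ j‖ ^ 2

/-! The odd coordinates of `AND(ψ, φ)` vanish unless the control bit `xₙ` is `1`, and there they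
are products `ψ_x φ_y` of coordinates. Hence `Prob (AND(ψ, φ)) ≤ Prob ψ · ‖φ‖²`, which for `φ = ψ`
a unit vector is the claim. -/

lemma two_pow_mul_add_lt {n m x y : ℕ} (hx : x < 2 ^ n) (hy : y < 2 ^ m) :
    2 ^ m * x + y < 2 ^ (n + m) :=
  calc 2 ^ m * x + y < 2 ^ m * (x + 1) := by rw [mul_add_one]; omega
    _ ≤ 2 ^ m * 2 ^ n := Nat.mul_le_mul_left _ hx
    _ = 2 ^ (n + m) := by rw [mul_comm, pow_add]

/-- The label of the basis vector `|x⟩ ⊗ |y⟩`: the bits of `x` followed by those of `y`. -/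
def appendIdx {n m : ℕ} (x : Fin (2 ^ n)) (y : Fin (2 ^ m)) : Fin (2 ^ (n + m)) :=
  ⟨2 ^ m * x + y, two_pow_mul_add_lt x.isLt y.isLt⟩

@[simp]
lemma appendIdx_val {n m : ℕ} (x : Fin (2 ^ n)) (y : Fin (2 ^ m)) :
    (appendIdx x y : ℕ) = 2 ^ m * x + y := rfl

@[simp]
lemma appendIdx_div {n m : ℕ} (x : Fin (2 ^ n)) (y : Fin (2 ^ m)) :
    (appendIdx x y : ℕ) / 2 ^ m = x := by
  rw [appendIdx_val, Nat.mul_add_div (Nat.two_pow_pos m), Nat.div_eq_of_lt y.isLt, add_zero]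

@[simp]
lemma appendIdx_mod {n m : ℕ} (x : Fin (2 ^ n)) (y : Fin (2 ^ m)) :
    (appendIdx x y : ℕ) % 2 ^ m = y := by
  rw [appendIdx_val, Nat.mul_add_mod, Nat.mod_eq_of_lt y.isLt]

lemma sum_appendIdx {M : Type*} [AddCommMonoid M] {n m : ℕ} (g : Fin (2 ^ (n + m)) → M) :
    ∑ j, g j = ∑ x : Fin (2 ^ n), ∑ y : Fin (2 ^ m), g (appendIdx x y) := by
  rw [← Fintype.sum_prod_type']
  refine (Fintype.sum_equiv (finProdFinEquiv.trans (finCongr (pow_add 2 n m).symm)) _ _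
    fun p => congrArg g (Fin.ext ?_)).symm
  simp [finProdFinEquiv, add_comm]

lemma tensor_apply_appendIdx {n m : ℕ} (ψ : QReg n) (φ : QReg m) (x : Fin (2 ^ n))
    (y : Fin (2 ^ m)) : tensor ψ φ (appendIdx x y) = ψ x * φ y :=
  congrArg₂ (fun i k => ψ i * φ k) (Fin.ext (appendIdx_div x y)) (Fin.ext (appendIdx_mod x y))

lemma prob_eq_sum_appendIdx_one {k : ℕ} (χ : QReg (k + 1)) :
    Prob χ = ∑ a : Fin (2 ^ k), ‖χ (appendIdx a 1)‖ ^ 2 := by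
  rw [Prob, Finset.sum_filter, sum_appendIdx]
  refine Finset.sum_congr rfl fun a _ => ?_
  rw [Finset.sum_eq_single 1]
  · simp
  · intro y _ hy
    fin_cases y <;> simp_all
  · simp

lemma flipIdx_appendIdx_one {k : ℕ} (a : Fin (2 ^ k)) :
    flipIdx (appendIdx a (1 : Fin (2 ^ 1))) = appendIdx a 0 := by
  have hodd : Odd (2 * (a : ℕ) + 1) := odd_two_mul_add_one _
  have hlt := (appendIdx a (0 : Fin (2 ^ 1))).isLt
  ext
  simp_all [flipIdx, Nat.xor_one_of_odd hodd, Nat.mod_eq_of_lt]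

lemma toffIdx_appendIdx_one {n m : ℕ} (a : Fin (2 ^ (n + m))) :
    toffIdx n m (appendIdx a 1) =
      if (a / 2 ^ m : ℕ) % 2 = 1 ∧ (a : ℕ) % 2 = 1 then appendIdx a 0 else appendIdx a 1 := by
  have hhalf : (2 * (a : ℕ) + 1) / 2 = a := by omega
  have hdiv : (2 * (a : ℕ) + 1) / 2 ^ (m + 1) = a / 2 ^ m := by
    rw [pow_succ', ← Nat.div_div_eq_div_mul, hhalf]
  simp [toffIdx, hdiv, hhalf, flipIdx_appendIdx_one]

lemma ANDg_apply_appendIdx_one {n m : ℕ} (ψ : QReg n) (φ : QReg m) (a : Fin (2 ^ (n + m))) :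
    ANDg n m ψ φ (appendIdx a 1) =
      if (a / 2 ^ m : ℕ) % 2 = 1 ∧ (a : ℕ) % 2 = 1 then tensor ψ φ a else 0 := by
  simp only [ANDg, Tg, PiLp.toLp_apply, toffIdx_appendIdx_one]
  split_ifs <;> simp [tensor_apply_appendIdx, ket0]

lemma prob_ANDg_le {n m : ℕ} (ψ : QReg n) (φ : QReg m) :
    Prob (ANDg n m ψ φ) ≤ Prob ψ * ‖φ‖ ^ 2 :=
  calc Prob (ANDg n m ψ φ) = ∑ a : Fin (2 ^ (n + m)), ‖ANDg n m ψ φ (appendIdx a 1)‖ ^ 2 :=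
        prob_eq_sum_appendIdx_one _
    _ ≤ ∑ a : Fin (2 ^ (n + m)), if (a / 2 ^ m : ℕ) % 2 = 1 then ‖tensor ψ φ a‖ ^ 2 else 0 := by
        gcongr with a
        rw [ANDg_apply_appendIdx_one]
        split_ifs <;> simp_all
    _ = ∑ x : Fin (2 ^ n), ∑ y : Fin (2 ^ m),
          if (x : ℕ) % 2 = 1 then ‖ψ x‖ ^ 2 * ‖φ y‖ ^ 2 else 0 := by
        simp only [sum_appendIdx, appendIdx_div, tensor_apply_appendIdx, norm_mul, mul_pow]
    _ = Prob ψ * ‖φ‖ ^ 2 := by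
        rw [Prob, EuclideanSpace.norm_sq_eq, Finset.sum_filter, Finset.sum_mul_sum]
        simp only [ite_mul, zero_mul]

theorem stmt15 (n : ℕ) (ψ : QReg n) (hψ : ‖ψ‖ = 1) :
    Prob (ANDg n n ψ ψ) ≤ Prob ψ := by
  simpa [hψ] using prob_ANDg_le ψ ψ

end
end

section
/- Weak distributivity fails: there exist unit vectors ψ, φ, χ in ℂ² such that Prob(OR(AND(ψ, φ), AND(ψ, χ))) > Prob(AND(ψ, OR(φ, χ))). (For example, this holds for ψ = φ = (√2/2)|0⟩ + (√2/2)|1⟩ and χ = (√3/2)|0⟩ + (1/2)|1⟩.) -/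
open Complex Finset

noncomputable section

/-!
`Prob` is multiplicative under `AND` and complementary under `NOT` (`Prob (NOT ψ) = ‖ψ‖² - Prob ψ`),
so for unit vectors `OR` acts on probabilities as `p + q - p q`. With `p, q, r` the probabilities of
`ψ, φ, χ`, the left side is `p (q + r - q r)` and the right side `p q + p r - p² q r`; they differ
by `p q r (1 - p)`, which is positive as soon as `0 < p < 1` and `q, r > 0`. The example has
`p = q = 1/2`, `r = 1/4`, giving `5/16 < 11/32`.
-/

def pairEquiv (n m : ℕ) : Fin (2 ^ n) × Fin (2 ^ m) ≃ Fin (2 ^ (n + m)) :=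
  finProdFinEquiv.trans (finCongr (pow_add 2 n m).symm)

def bitEquiv (n : ℕ) : Fin (2 ^ n) × Fin 2 ≃ Fin (2 ^ (n + 1)) :=
  finProdFinEquiv.trans (finCongr (pow_succ 2 n).symm)

section

variable {n m : ℕ}

@[simp] lemma pairEquiv_val (a : Fin (2 ^ n)) (b : Fin (2 ^ m)) :
    (pairEquiv n m (a, b) : ℕ) = b + 2 ^ m * a := rfl

@[simp] lemma bitEquiv_val (k : Fin (2 ^ n)) (c : Fin 2) :
    (bitEquiv n (k, c) : ℕ) = c + 2 * k := rfl

lemma pairEquiv_val_div (a : Fin (2 ^ n)) (b : Fin (2 ^ m)) :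
    (pairEquiv n m (a, b) : ℕ) / 2 ^ m = a := by
  rw [pairEquiv_val, Nat.add_mul_div_left _ _ (Nat.two_pow_pos m), Nat.div_eq_of_lt b.isLt, zero_add]

lemma pairEquiv_val_mod_two (a : Fin (2 ^ n)) (b : Fin (2 ^ (m + 1))) :
    (pairEquiv n (m + 1) (a, b) : ℕ) % 2 = b % 2 := by
  have h : 2 ^ (m + 1) * (a : ℕ) = 2 * (2 ^ m * a) := by ring
  rw [pairEquiv_val, h, Nat.add_mul_mod_self_left]

lemma sum_pairEquiv {M : Type*} [AddCommMonoid M] (f : Fin (2 ^ (n + m)) → M) :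
    ∑ j, f j = ∑ a, ∑ b, f (pairEquiv n m (a, b)) := by
  rw [← (pairEquiv n m).sum_comp, Fintype.sum_prod_type]

lemma sum_bitEquiv {M : Type*} [AddCommMonoid M] (f : Fin (2 ^ (n + 1)) → M) :
    ∑ j, f j = ∑ k, (f (bitEquiv n (k, 0)) + f (bitEquiv n (k, 1))) := by
  rw [← (bitEquiv n).sum_comp, Fintype.sum_prod_type]
  simp only [Fin.sum_univ_two]

lemma tensor_pairEquiv (ψ : QReg n) (φ : QReg m) (a : Fin (2 ^ n)) (b : Fin (2 ^ m)) :
    tensor ψ φ (pairEquiv n m (a, b)) = ψ a * φ b := by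
  show ψ _ * φ _ = _
  apply congrArg₂ (· * ·) <;> apply congrArg _ <;> ext
  · simp [Nat.add_mul_div_left _ _ (Nat.two_pow_pos m), Nat.div_eq_of_lt b.isLt]
  · simp [Nat.mod_eq_of_lt b.isLt]

lemma tensor_ket0_bitEquiv (v : QReg n) (k : Fin (2 ^ n)) (c : Fin 2) :
    tensor v ket0 (bitEquiv n (k, c)) = if c = 0 then v k else 0 := by
  rw [show bitEquiv n (k, c) = pairEquiv n 1 (k, c) from rfl, tensor_pairEquiv]
  fin_cases c <;> simp [ket0]

lemma flipIdx_bitEquiv (k : Fin (2 ^ n)) (c : Fin 2) :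
    flipIdx (bitEquiv n (k, c)) = bitEquiv n (k, c.rev) := by
  have hk := k.isLt
  have h2 : 2 ^ (n + 1) = 2 * 2 ^ n := by ring
  ext
  fin_cases c
  · simp [flipIdx, Nat.xor_one_of_even]
    rw [Nat.mod_eq_of_lt (by omega)]
    omega
  · simp only [flipIdx, bitEquiv_val]
    rw [Nat.xor_one_of_odd (by simp [add_comm 1]), Nat.mod_eq_of_lt (by omega)]
    simp

lemma toffIdx_bitEquiv (k : Fin (2 ^ (n + m))) (c : Fin 2) :
    toffIdx n m (bitEquiv (n + m) (k, c)) =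
      bitEquiv (n + m) (k, if (k : ℕ) / 2 ^ m % 2 = 1 ∧ (k : ℕ) % 2 = 1 then c.rev else c) := by
  have hdiv : ((c : ℕ) + 2 * k) / 2 = k := by omega
  have hdiv' : ((c : ℕ) + 2 * k) / 2 ^ (m + 1) = k / 2 ^ m := by
    rw [pow_succ', ← Nat.div_div_eq_div_mul, hdiv]
  unfold toffIdx
  simp only [bitEquiv_val, hdiv, hdiv']
  split_ifs <;> simp [flipIdx_bitEquiv]

lemma norm_sq_eq_sum_bitEquiv (v : QReg (n + 1)) :
    ‖v‖ ^ 2 = ∑ k, (‖v (bitEquiv n (k, 0))‖ ^ 2 + ‖v (bitEquiv n (k, 1))‖ ^ 2) := by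
  rw [EuclideanSpace.norm_sq_eq, sum_bitEquiv]

lemma Prob_eq_sum_bitEquiv (v : QReg (n + 1)) :
    Prob v = ∑ k, ‖v (bitEquiv n (k, 1))‖ ^ 2 := by
  rw [Prob, Finset.sum_filter, sum_bitEquiv]
  simp

lemma norm_sq_tensor (ψ : QReg n) (φ : QReg m) : ‖tensor ψ φ‖ ^ 2 = ‖ψ‖ ^ 2 * ‖φ‖ ^ 2 := by
  simp only [EuclideanSpace.norm_sq_eq, sum_pairEquiv, tensor_pairEquiv, norm_mul, mul_pow,
    Finset.sum_mul_sum]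

lemma norm_tensor (ψ : QReg n) (φ : QReg m) : ‖tensor ψ φ‖ = ‖ψ‖ * ‖φ‖ := by
  rw [← sq_eq_sq₀ (norm_nonneg _) (by positivity), norm_sq_tensor, mul_pow]

lemma norm_ket0 : ‖ket0‖ = 1 := by
  rw [← sq_eq_sq₀ (norm_nonneg _) zero_le_one, EuclideanSpace.norm_sq_eq]
  simp [ket0, Fin.sum_univ_two]

lemma norm_NOTg (ψ : QReg (n + 1)) : ‖NOTg (n + 1) ψ‖ = ‖ψ‖ := by
  rw [← sq_eq_sq₀ (norm_nonneg _) (norm_nonneg _), norm_sq_eq_sum_bitEquiv, norm_sq_eq_sum_bitEquiv]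
  simp [NOTg, flipIdx_bitEquiv, add_comm]

lemma Prob_NOTg (ψ : QReg (n + 1)) : Prob (NOTg (n + 1) ψ) = ‖ψ‖ ^ 2 - Prob ψ := by
  rw [norm_sq_eq_sum_bitEquiv, Prob_eq_sum_bitEquiv, Prob_eq_sum_bitEquiv, ← Finset.sum_sub_distrib]
  simp [NOTg, flipIdx_bitEquiv]

lemma norm_Tg (v : QReg (n + m + 1)) : ‖Tg n m v‖ = ‖v‖ := by
  rw [← sq_eq_sq₀ (norm_nonneg _) (norm_nonneg _), norm_sq_eq_sum_bitEquiv, norm_sq_eq_sum_bitEquiv]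
  refine Finset.sum_congr rfl fun k _ => ?_
  simp only [Tg, PiLp.toLp_apply, toffIdx_bitEquiv]
  split_ifs <;> simp [add_comm]

lemma norm_ANDg (ψ : QReg n) (φ : QReg m) : ‖ANDg n m ψ φ‖ = ‖ψ‖ * ‖φ‖ := by
  rw [ANDg, norm_Tg, norm_tensor, norm_tensor, norm_ket0, mul_one]

lemma Prob_ANDg (ψ : QReg n) (φ : QReg (m + 1)) : Prob (ANDg n (m + 1) ψ φ) = Prob ψ * Prob φ := by
  rw [Prob_eq_sum_bitEquiv, sum_pairEquiv, Prob, Prob, Finset.sum_filter, Finset.sum_filter,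
    Finset.sum_mul_sum]
  refine Finset.sum_congr rfl fun a _ => Finset.sum_congr rfl fun b _ => ?_
  simp only [ANDg, Tg, PiLp.toLp_apply, toffIdx_bitEquiv, pairEquiv_val_div, pairEquiv_val_mod_two,
    tensor_ket0_bitEquiv, tensor_pairEquiv]
  split_ifs <;> simp_all [mul_pow]

lemma Prob_ORg (ψ : QReg (n + 1)) (φ : QReg (m + 1)) :
    Prob (ORg (n + 1) (m + 1) ψ φ) =
      ‖ψ‖ ^ 2 * ‖φ‖ ^ 2 - (‖ψ‖ ^ 2 - Prob ψ) * (‖φ‖ ^ 2 - Prob φ) := by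
  rw [ORg, Prob_NOTg, norm_ANDg, Prob_ANDg, norm_NOTg, norm_NOTg, Prob_NOTg, Prob_NOTg, mul_pow]

theorem Prob_ANDg_ORg_lt_Prob_ORg_ANDg (ψ : QReg n) (φ χ : QReg (m + 1))
    (hψ : ‖ψ‖ = 1) (hφ : ‖φ‖ = 1) (hχ : ‖χ‖ = 1)
    (hψ₀ : 0 < Prob ψ) (hψ₁ : Prob ψ < 1) (hφ₀ : 0 < Prob φ) (hχ₀ : 0 < Prob χ) :
    Prob (ANDg n (m + 1 + (m + 1) + 1) ψ (ORg (m + 1) (m + 1) φ χ)) <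
      Prob (ORg (n + (m + 1) + 1) (n + (m + 1) + 1) (ANDg n (m + 1) ψ φ) (ANDg n (m + 1) ψ χ)) := by
  rw [Prob_ANDg, Prob_ORg, Prob_ORg, norm_ANDg, norm_ANDg, Prob_ANDg, Prob_ANDg, hψ, hφ, hχ]
  have := mul_pos (mul_pos hφ₀ hχ₀) (mul_pos hψ₀ (sub_pos.2 hψ₁))
  linarith

end

def qubit (a b : ℂ) : QReg 1 := WithLp.toLp 2 ![a, b]

lemma Prob_qubit (a b : ℂ) : Prob (qubit a b) = ‖b‖ ^ 2 := by
  simp [Prob, qubit, Finset.sum_filter]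

lemma norm_qubit (a b : ℂ) (h : ‖a‖ ^ 2 + ‖b‖ ^ 2 = 1) : ‖qubit a b‖ = 1 := by
  rw [← sq_eq_sq₀ (norm_nonneg _) zero_le_one, EuclideanSpace.norm_sq_eq]
  simpa [qubit, sum_bitEquiv] using h

theorem stmt19 :
    ∃ ψ φ χ : QReg 1, ‖ψ‖ = 1 ∧ ‖φ‖ = 1 ∧ ‖χ‖ = 1 ∧
      Prob (ANDg 1 (1 + 1 + 1) ψ (ORg 1 1 φ χ)) <
        Prob (ORg (1 + 1 + 1) (1 + 1 + 1) (ANDg 1 1 ψ φ) (ANDg 1 1 ψ χ)) := by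
  have hψ : ‖qubit (√2 / 2) (√2 / 2)‖ = 1 := norm_qubit _ _ (by norm_num [div_pow])
  have hχ : ‖qubit (√3 / 2) (1 / 2)‖ = 1 := norm_qubit _ _ (by norm_num [div_pow])
  have hψ_prob : Prob (qubit (√2 / 2) (√2 / 2)) = 1 / 2 := by
    rw [Prob_qubit]
    norm_num [div_pow]
  have hχ_prob : Prob (qubit (√3 / 2) (1 / 2)) = 1 / 4 := by
    rw [Prob_qubit]
    norm_num
  exact ⟨_, _, _, hψ, hψ, hχ, Prob_ANDg_ORg_lt_Prob_ORg_ANDg (m := 0) _ _ _ hψ hψ hχ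
    (by rw [hψ_prob]; norm_num) (by rw [hψ_prob]; norm_num) (by rw [hψ_prob]; norm_num)
    (by rw [hχ_prob]; norm_num)⟩

end
end
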